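/- arXiv:2212.05678 — 2 statements merged into one kernel-verified Lean document; each statement's English description precedes it below -/
import Mathlib

section
/- The A-convolution satisfies the convolution theorem: for μ ∈ M(ℝ) and f ∈ L¹(ℝ), 𝓕_A(μ ⋆_A f)(ω) = η̄_A(ω) 𝓕_A μ(ω) 𝓕_A f(ω). -/
/-!
Writing `K_ω` for the SAFT kernel, the whole proof rests on the phase identity
`e^{-i(a/b) s u} K_ω(u + s) = conj(η_A(ω)) K_ω(s) K_ω(u)`: after exchanging the `t`-integral
with the integral against `μ` (legitimate because `μ` is finite, `f ∈ L¹` and `|K_ω| = 1`),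
the substitution `t = u + s` turns the `t`-integral of `T^A_s f · K_ω` into
`conj(η_A(ω)) K_ω(s) · ∫ f K_ω`, and integrating `K_ω(s)` against `μ` gives `𝓕_A μ(ω)`.
-/

open MeasureTheory

/-- Integral of a complex-valued function against a complex (bounded regular Borel) measure,
via the Jordan decompositions of its real and imaginary parts. -/
noncomputable def integCM (μ : ComplexMeasure ℝ) (f : ℝ → ℂ) : ℂ :=
  ((∫ t, f t ∂(ComplexMeasure.re μ).toJordanDecomposition.posPart) -
      ∫ t, f t ∂(ComplexMeasure.re μ).toJordanDecomposition.negPart) +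
    Complex.I * ((∫ t, f t ∂(ComplexMeasure.im μ).toJordanDecomposition.posPart) -
      ∫ t, f t ∂(ComplexMeasure.im μ).toJordanDecomposition.negPart)

/-- The special affine Fourier transform with parameter set `A = {a,b,c,d,p,q}`. -/
noncomputable def saft (a b d p q : ℝ) (f : ℝ → ℂ) (ω : ℝ) : ℂ :=
  (Real.sqrt (2 * Real.pi * |b|) : ℂ)⁻¹ *
    ∫ t : ℝ, f t * Complex.exp (Complex.I / (2 * (b : ℂ)) *
      ((a * t ^ 2 + 2 * p * t - 2 * t * ω + d * ω ^ 2 + 2 * (b * q - d * p) * ω : ℝ) : ℂ))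

/-- The SAFT of a complex measure. -/
noncomputable def saftCM (a b d p q : ℝ) (μ : ComplexMeasure ℝ) (ω : ℝ) : ℂ :=
  (Real.sqrt (2 * Real.pi * |b|) : ℂ)⁻¹ *
    integCM μ (fun t => Complex.exp (Complex.I / (2 * (b : ℂ)) *
      ((a * t ^ 2 + 2 * p * t - 2 * t * ω + d * ω ^ 2 + 2 * (b * q - d * p) * ω : ℝ) : ℂ)))

/-- The `A`-translation `T^A_x f(t) = e^{-i(a/b)x(t-x)} f(t-x)`. -/
noncomputable def Atrans (a b x : ℝ) (f : ℝ → ℂ) (t : ℝ) : ℂ :=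
  Complex.exp (-Complex.I * ((a : ℂ) / b) * x * ((t : ℂ) - x)) * f (t - x)

/-- The `A`-convolution of a complex measure and a function. -/
noncomputable def convMA (a b : ℝ) (μ : ComplexMeasure ℝ) (f : ℝ → ℂ) (t : ℝ) : ℂ :=
  (Real.sqrt (2 * Real.pi * |b|) : ℂ)⁻¹ * integCM μ (fun s => Atrans a b s f t)

/-- `η_A(ω) = exp(i/(2b)(dω² + 2(bq - dp)ω))`. -/
noncomputable def etaA (b d p q ω : ℝ) : ℂ :=
  Complex.exp (Complex.I / (2 * (b : ℂ)) * ((d * ω ^ 2 + 2 * (b * q - d * p) * ω : ℝ) : ℂ))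


lemma integCM_const_mul (μ : ComplexMeasure ℝ) (c : ℂ) (g : ℝ → ℂ) :
    integCM μ (fun s => c * g s) = c * integCM μ g := by
  simp only [integCM, integral_const_mul]
  ring

lemma integCM_mul_const (μ : ComplexMeasure ℝ) (c : ℂ) (g : ℝ → ℂ) :
    integCM μ (fun s => g s * c) = integCM μ g * c := by
  simp only [integCM, integral_mul_const]
  ring

lemma integral_integCM_comm (μ : ComplexMeasure ℝ) (F : ℝ → ℝ → ℂ)
    (hF : ∀ (ν : Measure ℝ) [IsFiniteMeasure ν], Integrable (Function.uncurry F) (volume.prod ν)) :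
    ∫ t, integCM μ (F t) = integCM μ (fun s => ∫ t, F t s) := by
  simp only [integCM]
  set μr := (ComplexMeasure.re μ).toJordanDecomposition
  set μi := (ComplexMeasure.im μ).toJordanDecomposition
  have hint : ∀ (ν : Measure ℝ) [IsFiniteMeasure ν], Integrable (fun t => ∫ s, F t s ∂ν) :=
    fun ν _ => (hF ν).integral_prod_left
  have hre : Integrable (fun t => ∫ s, F t s ∂μr.posPart - ∫ s, F t s ∂μr.negPart) :=
    (hint _).sub (hint _)
  have him : Integrable (fun t => ∫ s, F t s ∂μi.posPart - ∫ s, F t s ∂μi.negPart) :=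
    (hint _).sub (hint _)
  rw [integral_add hre (him.const_mul _), integral_sub (hint _) (hint _), integral_const_mul,
    integral_sub (hint _) (hint _), integral_integral_swap (hF μr.posPart),
    integral_integral_swap (hF μr.negPart), integral_integral_swap (hF μi.posPart),
    integral_integral_swap (hF μi.negPart)]

lemma MeasureTheory.Integrable.comp_sub_prod {G E : Type*} [AddGroup G] [MeasurableSpace G]
    [MeasurableAdd₂ G] [MeasurableNeg G] [NormedAddCommGroup E] [NormedSpace ℝ E]
    {μ ν : Measure G} [SFinite μ] [μ.IsAddRightInvariant] [IsFiniteMeasure ν]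
    {f : G → E} (hf : Integrable f μ) :
    Integrable (fun p : G × G => f (p.1 - p.2)) (μ.prod ν) := by
  simpa using (integrable_const (1 : ℝ)).convolution_integrand
    (ContinuousLinearMap.lsmul ℝ ℝ) hf (ν := ν)

section SAFT

variable (a b d p q ω : ℝ)

noncomputable def saftKernel (t : ℝ) : ℂ :=
  Complex.exp (Complex.I / (2 * (b : ℂ)) *
    ((a * t ^ 2 + 2 * p * t - 2 * t * ω + d * ω ^ 2 + 2 * (b * q - d * p) * ω : ℝ) : ℂ))

lemma saft_eq (f : ℝ → ℂ) :
    saft a b d p q f ω =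
      (Real.sqrt (2 * Real.pi * |b|) : ℂ)⁻¹ * ∫ t, f t * saftKernel a b d p q ω t :=
  rfl

lemma saftCM_eq (μ : ComplexMeasure ℝ) :
    saftCM a b d p q μ ω =
      (Real.sqrt (2 * Real.pi * |b|) : ℂ)⁻¹ * integCM μ (saftKernel a b d p q ω) :=
  rfl

lemma continuous_saftKernel : Continuous (saftKernel a b d p q ω) := by
  unfold saftKernel
  fun_prop

lemma norm_saftKernel (t : ℝ) : ‖saftKernel a b d p q ω t‖ = 1 := by
  have h : Complex.I / (2 * (b : ℂ)) *
      ((a * t ^ 2 + 2 * p * t - 2 * t * ω + d * ω ^ 2 + 2 * (b * q - d * p) * ω : ℝ) : ℂ) =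
      (((a * t ^ 2 + 2 * p * t - 2 * t * ω + d * ω ^ 2 + 2 * (b * q - d * p) * ω) / (2 * b) : ℝ)
        : ℂ) * Complex.I := by
    push_cast
    ring
  rw [saftKernel, h, Complex.norm_exp_ofReal_mul_I]

lemma norm_Atrans_phase (s t : ℝ) :
    ‖Complex.exp (-Complex.I * ((a : ℂ) / b) * s * ((t : ℂ) - s))‖ = 1 := by
  have h : -Complex.I * ((a : ℂ) / b) * s * ((t : ℂ) - s) =
      ((-(a / b * s * (t - s)) : ℝ) : ℂ) * Complex.I := by
    push_cast
    ring
  rw [h, Complex.norm_exp_ofReal_mul_I]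

lemma star_etaA :
    (starRingEnd ℂ) (etaA b d p q ω) =
      Complex.exp (-(Complex.I / (2 * (b : ℂ))) *
        ((d * ω ^ 2 + 2 * (b * q - d * p) * ω : ℝ) : ℂ)) := by
  have h2b : 2 * (b : ℂ) = ((2 * b : ℝ) : ℂ) := by push_cast; ring
  rw [etaA, ← Complex.exp_conj, map_mul, h2b, map_div₀, Complex.conj_I, Complex.conj_ofReal,
    Complex.conj_ofReal, neg_div]

/-- The cross term `2a·su/(2b)` of `a(u+s)²/(2b)` cancels the modulation, and the `ω`-only part of
the phase, counted twice on the right and once on the left, is compensated by `conj(η_A(ω))`. -/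
lemma exp_mul_saftKernel_add (hb : b ≠ 0) (s u : ℝ) :
    Complex.exp (-Complex.I * ((a : ℂ) / b) * s * u) * saftKernel a b d p q ω (u + s) =
      (starRingEnd ℂ) (etaA b d p q ω) * saftKernel a b d p q ω s *
        saftKernel a b d p q ω u := by
  have hb' : (b : ℂ) ≠ 0 := by exact_mod_cast hb
  rw [star_etaA, saftKernel, saftKernel, saftKernel, ← Complex.exp_add, ← Complex.exp_add,
    ← Complex.exp_add]
  congr 1
  push_cast
  field_simp
  ring

lemma integral_Atrans_mul_saftKernel (hb : b ≠ 0) (f : ℝ → ℂ) (s : ℝ) :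
    ∫ t, Atrans a b s f t * saftKernel a b d p q ω t =
      (starRingEnd ℂ) (etaA b d p q ω) * saftKernel a b d p q ω s *
        ∫ u, f u * saftKernel a b d p q ω u := by
  have hshift : ∀ u : ℝ, Atrans a b s f (u + s) * saftKernel a b d p q ω (u + s) =
      (starRingEnd ℂ) (etaA b d p q ω) * saftKernel a b d p q ω s *
        (f u * saftKernel a b d p q ω u) := by
    intro u
    have hu : ((u + s : ℝ) : ℂ) - (s : ℂ) = (u : ℂ) := by push_cast; ring
    rw [Atrans, hu, add_sub_cancel_right, mul_right_comm,
      exp_mul_saftKernel_add a b d p q ω hb s u]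
    ring
  rw [← integral_add_right_eq_self _ s]
  simp only [hshift, integral_const_mul]

lemma integrable_Atrans_mul_saftKernel {f : ℝ → ℂ} (hf : Integrable f)
    (ν : Measure ℝ) [IsFiniteMeasure ν] :
    Integrable (fun z : ℝ × ℝ => Atrans a b z.2 f z.1 * saftKernel a b d p q ω z.1)
      (volume.prod ν) := by
  have hphase : Continuous fun z : ℝ × ℝ =>
      Complex.exp (-Complex.I * ((a : ℂ) / b) * z.2 * ((z.1 : ℂ) - z.2)) *
        saftKernel a b d p q ω z.1 :=
    (by fun_prop : Continuous _).mul ((continuous_saftKernel a b d p q ω).comp continuous_fst)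
  have hbound : ∀ z : ℝ × ℝ,
      ‖Complex.exp (-Complex.I * ((a : ℂ) / b) * z.2 * ((z.1 : ℂ) - z.2)) *
        saftKernel a b d p q ω z.1‖ ≤ 1 := fun z => by
    rw [norm_mul, norm_Atrans_phase, norm_saftKernel, one_mul]
  refine ((hf.comp_sub_prod (ν := ν)).bdd_mul hphase.aestronglyMeasurable
    (Filter.Eventually.of_forall hbound)).congr (Filter.Eventually.of_forall fun z => ?_)
  simp only [Atrans]
  ring

end SAFT

theorem saft_convMA_general (a b d p q : ℝ) (hb : b ≠ 0)
    (μ : ComplexMeasure ℝ) (f : ℝ → ℂ) (hf : Integrable f) (ω : ℝ) :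
    saft a b d p q (convMA a b μ f) ω =
      (starRingEnd ℂ) (etaA b d p q ω) * saftCM a b d p q μ ω * saft a b d p q f ω := by
  set k := (Real.sqrt (2 * Real.pi * |b|) : ℂ)⁻¹
  set K := saftKernel a b d p q ω
  have hFubini : ∫ t, integCM μ (fun s => Atrans a b s f t * K t) =
      integCM μ (fun s => ∫ t, Atrans a b s f t * K t) :=
    integral_integCM_comm μ (fun t s => Atrans a b s f t * K t)
      (integrable_Atrans_mul_saftKernel a b d p q ω hf)
  calc saft a b d p q (convMA a b μ f) ω
      = k * (k * ∫ t, integCM μ (fun s => Atrans a b s f t * K t)) := by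
        simp only [saft_eq, convMA, integCM_mul_const, mul_assoc, integral_const_mul, k, K]
    _ = k * (k * integCM μ (fun s =>
          (starRingEnd ℂ) (etaA b d p q ω) * (∫ u, f u * K u) * K s)) := by
        simp only [hFubini, K, integral_Atrans_mul_saftKernel a b d p q ω hb,
          mul_right_comm _ (K _)]
    _ = (starRingEnd ℂ) (etaA b d p q ω) * saftCM a b d p q μ ω * saft a b d p q f ω := by
        rw [integCM_const_mul, saftCM_eq, saft_eq]
        ring

/-- Convolution theorem for the SAFT:
`𝓕_A(μ ⋆_A f) = conj(η_A) ⋅ 𝓕_A μ ⋅ 𝓕_A f`. -/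
theorem saft_convMA (a b c d p q : ℝ) (hb : b ≠ 0) (hA : a * d - b * c = 1)
    (μ : ComplexMeasure ℝ) (f : ℝ → ℂ) (hf : Integrable f) (ω : ℝ) :
    saft a b d p q (convMA a b μ f) ω =
      (starRingEnd ℂ) (etaA b d p q ω) * saftCM a b d p q μ ω * saft a b d p q f ω :=
  saft_convMA_general a b d p q hb μ f hf ω
end

section
/- If {T^A_k φ : k ∈ ℤ} is a frame for its closed linear span V_A(φ) with frame operator S, then S commutes with each T^A_k, and consequently the canonical dual frame is {T^A_k S^{-1}φ : k ∈ ℤ}, i.e., the dual frame elements are A-translates of the single function S^{-1}φ. -/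
/-!
Since `T^A_k T^A_m = e^{-i(a/b)km} T^A_{k+m}` and each `T^A_k` is an isometry of `L²(ℝ)` (a
unimodular chirp times a translation), `T^A_k` permutes the system `{T^A_j φ}` up to unimodular
phases. These phases cancel in `⟨T^A_j φ, f⟩ T^A_j φ`, so reindexing the frame sum gives
`S T^A_k = T^A_k S`. As `T^A_k` also leaves `V_A(φ)` invariant, it then commutes with the inverse
of `S` on `V_A(φ)`, which gives `S⁻¹ T^A_k φ = T^A_k S⁻¹ φ`.
-/

open MeasureTheory

theorem norm_exp_neg_I_mul (a b x y : ℝ) :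
    ‖Complex.exp (-Complex.I * ((a : ℂ) / b) * x * y)‖ = 1 := by
  rw [Complex.norm_exp]
  simp

theorem norm_Atrans (a b x : ℝ) (f : ℝ → ℂ) (t : ℝ) : ‖Atrans a b x f t‖ = ‖f (t - x)‖ := by
  rw [Atrans, norm_mul, ← Complex.ofReal_sub, norm_exp_neg_I_mul, one_mul]

theorem Atrans_zero (a b : ℝ) (f : ℝ → ℂ) : Atrans a b 0 f = f := by
  ext t
  simp [Atrans]

theorem Atrans_Atrans (a b x y : ℝ) (f : ℝ → ℂ) :
    Atrans a b x (Atrans a b y f)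
      = Complex.exp (-Complex.I * ((a : ℂ) / b) * x * y) • Atrans a b (x + y) f := by
  ext t
  simp only [Atrans, Pi.smul_apply, smul_eq_mul, sub_sub, ← mul_assoc, ← Complex.exp_add]
  congr 2
  push_cast
  ring

theorem Atrans_congr_ae (a b x : ℝ) {f g : ℝ → ℂ} (h : f =ᵐ[volume] g) :
    Atrans a b x f =ᵐ[volume] Atrans a b x g := by
  filter_upwards [(measurePreserving_sub_right volume x).quasiMeasurePreserving.ae_eq_comp h]
    with t ht
  simp only [Atrans, Function.comp_apply] at ht ⊢
  rw [ht]

theorem Lp.norm_eq_of_ae_eq_Atrans {p : ENNReal} (a b x : ℝ) {f g : Lp ℂ p (volume : Measure ℝ)}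
    (hg : (g : ℝ → ℂ) =ᵐ[volume] Atrans a b x f) : ‖g‖ = ‖f‖ := by
  have hnorm : ∀ᵐ t ∂volume, ‖g t‖ = ‖((f : ℝ → ℂ) ∘ fun t => t - x) t‖ :=
    hg.mono fun t ht => by rw [ht, norm_Atrans, Function.comp_apply]
  rw [Lp.norm_def, Lp.norm_def, eLpNorm_congr_norm_ae hnorm,
    eLpNorm_comp_measurePreserving (Lp.aestronglyMeasurable f) (measurePreserving_sub_right volume x)]

theorem Lp.eq_smul_of_ae_eq_Atrans_Atrans {p : ENNReal} {a b x y : ℝ}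
    {f g h w : Lp ℂ p (volume : Measure ℝ)} (hg : (g : ℝ → ℂ) =ᵐ[volume] Atrans a b x h)
    (hh : (h : ℝ → ℂ) =ᵐ[volume] Atrans a b y f) (hw : (w : ℝ → ℂ) =ᵐ[volume] Atrans a b (x + y) f) :
    g = Complex.exp (-Complex.I * ((a : ℂ) / b) * x * y) • w := by
  refine Lp.ext ((hg.trans (Atrans_congr_ae a b x hh)).trans ?_)
  rw [Atrans_Atrans]
  filter_upwards [hw, Lp.coeFn_smul (Complex.exp (-Complex.I * ((a : ℂ) / b) * x * y)) w]
    with t hwt hst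
  rw [hst, Pi.smul_apply, Pi.smul_apply, hwt]

namespace LinearIsometry

variable {𝕜 E F ι : Type*} [RCLike 𝕜] [NormedAddCommGroup E] [NormedAddCommGroup F]
  [NormedSpace 𝕜 E] [NormedSpace 𝕜 F] [CompleteSpace E]

theorem summable_comp_iff (U : E →ₗᵢ[𝕜] F) {f : ι → E} :
    Summable (fun i => U (f i)) ↔ Summable f := by
  classical
  refine ⟨fun ⟨y, hy⟩ => summable_iff_cauchySeq_finset.2 ?_, U.toContinuousLinearMap.summable⟩
  have hU : CauchySeq (U ∘ fun s : Finset ι => ∑ i ∈ s, f i) := by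
    simpa only [Function.comp_def, map_sum] using hy.cauchySeq
  rwa [CauchySeq, ← Filter.map_map, U.isometry.isUniformInducing.cauchy_map_iff] at hU

theorem map_tsum (U : E →ₗᵢ[𝕜] F) (f : ι → E) : U (∑' i, f i) = ∑' i, U (f i) := by
  by_cases hf : Summable f
  · exact U.toContinuousLinearMap.map_tsum hf
  · rw [tsum_eq_zero_of_not_summable hf, tsum_eq_zero_of_not_summable (mt U.summable_comp_iff.1 hf),
      map_zero]

end LinearIsometry

section FrameOperator

variable (𝕜 : Type*) {E ι : Type*} [RCLike 𝕜] [NormedAddCommGroup E] [InnerProductSpace 𝕜 E]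

noncomputable def frameOperator (g : ι → E) (f : E) : E :=
  ∑' j, inner 𝕜 (g j) f • g j

variable {𝕜}

theorem LinearIsometry.map_frameOperator [CompleteSpace E] (U : E →ₗᵢ[𝕜] E) {g : ι → E}
    (e : ι ≃ ι) (c : ι → 𝕜) (hc : ∀ j, ‖c j‖ = 1) (hUg : ∀ j, U (g j) = c j • g (e j)) (f : E) :
    U (frameOperator 𝕜 g f) = frameOperator 𝕜 g (U f) := by
  rw [frameOperator, U.map_tsum, frameOperator, ← e.tsum_eq (fun j => inner 𝕜 (g j) (U f) • g j)]
  refine tsum_congr fun j => ?_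
  have hcoeff : inner 𝕜 (g j) f * c j = inner 𝕜 (g (e j)) (U f) := by
    rw [← U.inner_map_map, hUg, inner_smul_left, mul_comm, ← mul_assoc, RCLike.mul_conj, hc,
      RCLike.ofReal_one, one_pow, one_mul]
  rw [map_smul, hUg, smul_smul, hcoeff]

end FrameOperator

theorem ContinuousLinearMap.mapsTo_topologicalClosure_span {R M ι : Type*} [Semiring R]
    [TopologicalSpace R] [TopologicalSpace M] [AddCommMonoid M] [Module R M] [ContinuousSMul R M]
    [ContinuousAdd M] (T : M →L[R] M) {g : ι → M}
    (hTg : ∀ j, T (g j) ∈ Submodule.span R (Set.range g)) :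
    Set.MapsTo T (Submodule.span R (Set.range g)).topologicalClosure
      (Submodule.span R (Set.range g)).topologicalClosure := by
  refine Submodule.topologicalClosure_mem_invtSubmodule (f := T) ?_
  rw [Module.End.mem_invtSubmodule_iff_map_le, Submodule.map_span_le]
  rintro _ ⟨j, rfl⟩
  exact hTg j

theorem Set.InvOn.map_comm_of_map_comm {α : Type*} {V : Set α} {S Sinv U : α → α}
    (hinv : Set.InvOn Sinv S V V) (hSinv : Set.MapsTo Sinv V V) (hU : Set.MapsTo U V V)
    (hSU : ∀ x ∈ V, S (U x) = U (S x)) {x : α} (hx : x ∈ V) : Sinv (U x) = U (Sinv x) := by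
  conv_lhs => rw [← hinv.2 hx]
  rw [← hSU _ (hSinv hx), hinv.1 (hU (hSinv hx))]

theorem dual_frame_of_Atrans_general (a b : ℝ)
    (φ : Lp ℂ 2 (volume : Measure ℝ))
    (Tk : ℤ → (Lp ℂ 2 (volume : Measure ℝ) →L[ℂ] Lp ℂ 2 (volume : Measure ℝ)))
    (hTk : ∀ (k : ℤ) (f : Lp ℂ 2 (volume : Measure ℝ)),
      (Tk k f : ℝ → ℂ) =ᵐ[volume] Atrans a b (k : ℝ) (f : ℝ → ℂ))
    (V : Submodule ℂ (Lp ℂ 2 (volume : Measure ℝ)))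
    (hV : V = (Submodule.span ℂ (Set.range fun k : ℤ => Tk k φ)).topologicalClosure)
    (S Sinv : Lp ℂ 2 (volume : Measure ℝ) →L[ℂ] Lp ℂ 2 (volume : Measure ℝ))
    (hS : ∀ f, S f = ∑' k : ℤ, (inner ℂ (Tk k φ) f : ℂ) • Tk k φ)
    (hSinvV : ∀ f ∈ V, Sinv f ∈ V)
    (hSinvS : ∀ f ∈ V, Sinv (S f) = f) (hSSinv : ∀ f ∈ V, S (Sinv f) = f) :
    (∀ k : ℤ, ∀ f ∈ V, S (Tk k f) = Tk k (S f)) ∧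
      (∀ k : ℤ, Sinv (Tk k φ) = Tk k (Sinv φ)) := by
  have hTT (k m : ℤ) (f : Lp ℂ 2 (volume : Measure ℝ)) :
      Tk k (Tk m f) = Complex.exp (-Complex.I * ((a : ℂ) / b) * k * m) • Tk (k + m) f := by
    exact_mod_cast Lp.eq_smul_of_ae_eq_Atrans_Atrans (hTk k _) (hTk m f)
      (by exact_mod_cast hTk (k + m) f)
  have hcomm (k : ℤ) (f : Lp ℂ 2 (volume : Measure ℝ)) : S (Tk k f) = Tk k (S f) := by
    let U : Lp ℂ 2 (volume : Measure ℝ) →ₗᵢ[ℂ] Lp ℂ 2 (volume : Measure ℝ) :=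
      ⟨Tk k, fun f => Lp.norm_eq_of_ae_eq_Atrans a b k (hTk k f)⟩
    have hS' : ⇑S = frameOperator ℂ fun j => Tk j φ := funext hS
    rw [hS']
    exact (U.map_frameOperator (Equiv.addLeft k) _ (fun j => norm_exp_neg_I_mul a b k j)
      (fun j => hTT k j φ) f).symm
  have hφV : φ ∈ V := by
    have hT0 : Tk 0 φ = φ := Lp.ext ((hTk 0 φ).trans (by rw [Int.cast_zero, Atrans_zero]))
    exact hV ▸ Submodule.le_topologicalClosure _ (Submodule.subset_span ⟨0, hT0⟩)
  have hTkV (k : ℤ) : Set.MapsTo (Tk k) V V := hV ▸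
    (Tk k).mapsTo_topologicalClosure_span fun j => hTT k j φ ▸
      Submodule.smul_mem _ _ (Submodule.subset_span ⟨k + j, rfl⟩)
  exact ⟨fun k f _ => hcomm k f, fun k => Set.InvOn.map_comm_of_map_comm ⟨hSinvS, hSSinv⟩ hSinvV
    (hTkV k) (fun f _ => hcomm k f) hφV⟩

/-- If `{T^A_k φ}_{k∈ℤ}` is a frame for its closed span `V_A(φ)` with frame operator `S`,
then `S` commutes with every `T^A_k`, and the canonical dual frame consists of the
`A`-translates `{T^A_k S⁻¹φ}` of the single function `S⁻¹φ`. -/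
theorem dual_frame_of_Atrans (a b : ℝ) (hb : b ≠ 0)
    (φ : Lp ℂ 2 (volume : Measure ℝ))
    (Tk : ℤ → (Lp ℂ 2 (volume : Measure ℝ) →L[ℂ] Lp ℂ 2 (volume : Measure ℝ)))
    (hTk : ∀ (k : ℤ) (f : Lp ℂ 2 (volume : Measure ℝ)),
      (Tk k f : ℝ → ℂ) =ᵐ[volume] Atrans a b (k : ℝ) (f : ℝ → ℂ))
    (V : Submodule ℂ (Lp ℂ 2 (volume : Measure ℝ)))
    (hV : V = (Submodule.span ℂ (Set.range fun k : ℤ => Tk k φ)).topologicalClosure)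
    (hframe : ∃ m M : ℝ, 0 < m ∧ 0 < M ∧ ∀ f ∈ V,
      m * ‖f‖ ^ 2 ≤ (∑' k : ℤ, ‖(inner ℂ (Tk k φ) f : ℂ)‖ ^ 2) ∧
      (∑' k : ℤ, ‖(inner ℂ (Tk k φ) f : ℂ)‖ ^ 2) ≤ M * ‖f‖ ^ 2)
    (S Sinv : Lp ℂ 2 (volume : Measure ℝ) →L[ℂ] Lp ℂ 2 (volume : Measure ℝ))
    (hS : ∀ f, S f = ∑' k : ℤ, (inner ℂ (Tk k φ) f : ℂ) • Tk k φ)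
    (hSV : ∀ f ∈ V, S f ∈ V) (hSinvV : ∀ f ∈ V, Sinv f ∈ V)
    (hSinvS : ∀ f ∈ V, Sinv (S f) = f) (hSSinv : ∀ f ∈ V, S (Sinv f) = f) :
    (∀ k : ℤ, ∀ f ∈ V, S (Tk k f) = Tk k (S f)) ∧
      (∀ k : ℤ, Sinv (Tk k φ) = Tk k (Sinv φ)) :=
  dual_frame_of_Atrans_general a b φ Tk hTk V hV S Sinv hS hSinvV hSinvS hSSinv
end
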